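/- arXiv:1303.1847 — 5 statements merged into one kernel-verified Lean document; each statement's English description precedes it below -/
import Mathlib

section
/- Let I ⊆ {1,…,N} with |I| = k, let δ ∈ (0,1), and set s = 8·log(2N/ε). Suppose Φ_I^T Φ_I is invertible with ‖(Φ_I^T Φ_I)^{−1}‖ ≤ 1/(1−δ), and that ‖Φ_I^T φ_i‖₂² ≤ (1−δ)²/s for all i ∈ I^c. Then every h ∈ ℝ^N with Φh = 0 satisfies ‖h_I‖₂ ≤ s^{−1/2} · ‖h_{I^c}‖₁. -/
open Finset Matrix

open scoped Classical

noncomputable section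

/-- The ℓ₂→ℓ₂ operator (spectral) norm of a real matrix. -/
def specNorm {α β : Type*} [Fintype α] [Fintype β] (A : Matrix α β ℝ) : ℝ :=
  sSup {t : ℝ | ∃ x : β → ℝ, (∑ j, x j ^ 2) ≤ 1 ∧ t = Real.sqrt (∑ i, (∑ j, A i j * x j) ^ 2)}

variable {m N : ℕ}

/-- The submatrix of `Φ` formed by the columns indexed by `I`. -/
def colSub (Φ : Matrix (Fin m) (Fin N) ℝ) (I : Finset (Fin N)) :
    Matrix (Fin m) {i // i ∈ I} ℝ :=
  Matrix.of fun r j => Φ r (j : Fin N)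

/-- The Gram matrix `Φ_Iᵀ Φ_I`. -/
def gram (Φ : Matrix (Fin m) (Fin N) ℝ) (I : Finset (Fin N)) :
    Matrix {i // i ∈ I} {i // i ∈ I} ℝ :=
  (colSub Φ I)ᵀ * colSub Φ I

/-- `‖Φ_Iᵀ φ_i‖₂²`. -/
def sincSq (Φ : Matrix (Fin m) (Fin N) ℝ) (I : Finset (Fin N)) (i : Fin N) : ℝ :=
  ∑ j ∈ I, (∑ r, Φ r j * Φ r i) ^ 2

/-- All columns of `Φ` have unit ℓ₂ norm. -/
def unitCols (Φ : Matrix (Fin m) (Fin N) ℝ) : Prop :=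
  ∀ j, (∑ r, Φ r j ^ 2) = 1

/-- `Φ` is `(k,δ,ε)`-StRIP: a uniformly random `k`-subset `I` satisfies
`‖Φ_Iᵀ Φ_I − Id‖ ≤ δ` with probability at least `1 − ε`. -/
def StRIP (Φ : Matrix (Fin m) (Fin N) ℝ) (k : ℕ) (δ ε : ℝ) : Prop :=
  (1 - ε) * ((Finset.powersetCard k (univ : Finset (Fin N))).card : ℝ) ≤
    (((Finset.powersetCard k (univ : Finset (Fin N))).filter
        fun I => specNorm (gram Φ I - 1) ≤ δ).card : ℝ)

/-- `Φ` is `(k,α,ε)`-SINC: a uniformly random `k`-subset `I` satisfies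
`max_{i ∉ I} ‖Φ_Iᵀ φ_i‖₂² ≤ α` with probability at least `1 − ε`. -/
def SINC (Φ : Matrix (Fin m) (Fin N) ℝ) (k : ℕ) (α ε : ℝ) : Prop :=
  (1 - ε) * ((Finset.powersetCard k (univ : Finset (Fin N))).card : ℝ) ≤
    (((Finset.powersetCard k (univ : Finset (Fin N))).filter
        fun I => ∀ i ∉ I, sincSq Φ I i ≤ α).card : ℝ)

/-- ℓ₁ norm on `ℝ^N`. -/
def l1 (x : Fin N → ℝ) : ℝ := ∑ i, |x i|

/-- ℓ₂ norm on `ℝ^N`. -/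
def l2 (x : Fin N → ℝ) : ℝ := Real.sqrt (∑ i, x i ^ 2)

/-- Restriction `x_I` of a vector to the coordinates in `I` (zero outside `I`). -/
def restr (I : Finset (Fin N)) (x : Fin N → ℝ) : Fin N → ℝ :=
  fun i => if i ∈ I then x i else 0

/-- `x` is `k`-sparse. -/
def kSparse (k : ℕ) (x : Fin N → ℝ) : Prop :=
  ((univ : Finset (Fin N)).filter fun i => x i ≠ 0).card ≤ k

/-- `min_{x' k-sparse} ‖x − x′‖₁`. -/
def bestK (k : ℕ) (x : Fin N → ℝ) : ℝ :=
  sInf {t : ℝ | ∃ x' : Fin N → ℝ, kSparse k x' ∧ t = l1 (x - x')}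

/-- `xh` is a (noiseless) Basis Pursuit solution for the data `y`. -/
def isBPsol (Φ : Matrix (Fin m) (Fin N) ℝ) (y : Fin m → ℝ) (xh : Fin N → ℝ) : Prop :=
  Φ.mulVec xh = y ∧ ∀ u : Fin N → ℝ, Φ.mulVec u = y → l1 xh ≤ l1 u

/-! From `Φ h = 0` one gets `Φ_Iᵀ Φ_I h_I = -∑_{i ∉ I} h_i Φ_Iᵀ φ_i`. Inverting the Gram matrix and
applying the triangle inequality gives
`‖h_I‖₂ ≤ ‖(Φ_Iᵀ Φ_I)⁻¹‖ ∑_{i ∉ I} |h_i| ‖Φ_Iᵀ φ_i‖₂ ≤ (1 - δ)⁻¹ · (1 - δ) s^{-1/2} ‖h_{Iᶜ}‖₁`. -/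

attribute [local instance] Matrix.instL2OpNormedAddCommGroup

lemma norm_toLp_eq_sqrt_sum_sq {ι : Type*} [Fintype ι] (x : ι → ℝ) :
    ‖WithLp.toLp 2 x‖ = √(∑ i, x i ^ 2) := by
  simp [EuclideanSpace.norm_eq]

lemma specNorm_eq_l2_opNorm {α β : Type*} [Fintype α] [Fintype β] (A : Matrix α β ℝ) :
    specNorm A = ‖A‖ := by
  rw [Matrix.l2_opNorm_def, ← ContinuousLinearMap.sSup_unitClosedBall_eq_norm, specNorm]
  congr 1
  ext t
  constructor
  · rintro ⟨x, hx, rfl⟩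
    refine ⟨WithLp.toLp 2 x, ?_, ?_⟩
    · simpa [norm_toLp_eq_sqrt_sum_sq] using hx
    · simp [norm_toLp_eq_sqrt_sum_sq, Matrix.mulVec, dotProduct]
  · rintro ⟨x, hx, rfl⟩
    refine ⟨x.ofLp, ?_, ?_⟩
    · simpa [EuclideanSpace.norm_eq] using hx
    · simp [EuclideanSpace.norm_eq, Matrix.mulVec, dotProduct]

lemma norm_mulVec_le_specNorm {α β : Type*} [Fintype α] [Fintype β] (A : Matrix α β ℝ) (x : β → ℝ) :
    ‖WithLp.toLp 2 (A *ᵥ x)‖ ≤ specNorm A * ‖WithLp.toLp 2 x‖ := by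
  rw [specNorm_eq_l2_opNorm]
  exact A.l2_opNorm_mulVec (WithLp.toLp 2 x)

lemma restr_add_restr_compl (I : Finset (Fin N)) (x : Fin N → ℝ) :
    restr I x + restr Iᶜ x = x := by
  ext i
  by_cases hi : i ∈ I <;> simp [restr, hi]

lemma l1_restr (I : Finset (Fin N)) (x : Fin N → ℝ) : l1 (restr I x) = ∑ i ∈ I, |x i| := by
  simp [l1, restr, apply_ite, Finset.sum_ite_mem]

lemma l2_restr (I : Finset (Fin N)) (x : Fin N → ℝ) :
    l2 (restr I x) = ‖WithLp.toLp 2 (fun j : I => x j)‖ := by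
  rw [norm_toLp_eq_sqrt_sum_sq, l2, Finset.sum_coe_sort I (fun i => x i ^ 2)]
  simp [restr, Finset.sum_ite_mem]

lemma mulVec_restr (Φ : Matrix (Fin m) (Fin N) ℝ) (I : Finset (Fin N)) (x : Fin N → ℝ) :
    Φ *ᵥ restr I x = ∑ i ∈ I, x i • Φᵀ i := by
  ext r
  simp [Matrix.mulVec, dotProduct, restr, Finset.sum_apply, mul_comm, Finset.sum_ite_mem]

lemma colSub_mulVec (Φ : Matrix (Fin m) (Fin N) ℝ) (I : Finset (Fin N)) (x : Fin N → ℝ) :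
    colSub Φ I *ᵥ (fun j : I => x j) = Φ *ᵥ restr I x := by
  ext r
  simp only [Matrix.mulVec, dotProduct, colSub, Matrix.of_apply]
  rw [Finset.sum_coe_sort I (fun i => Φ r i * x i)]
  simp [restr, Finset.sum_ite_mem]

lemma norm_colSub_transpose_mulVec_col (Φ : Matrix (Fin m) (Fin N) ℝ) (I : Finset (Fin N))
    (i : Fin N) : ‖WithLp.toLp 2 ((colSub Φ I)ᵀ *ᵥ Φᵀ i)‖ = √(sincSq Φ I i) := by
  rw [norm_toLp_eq_sqrt_sum_sq, sincSq, ← Finset.sum_coe_sort I]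
  rfl

lemma gram_mulVec_eq_neg_of_mulVec_eq_zero {Φ : Matrix (Fin m) (Fin N) ℝ} {h : Fin N → ℝ}
    (I : Finset (Fin N)) (hker : Φ *ᵥ h = 0) :
    gram Φ I *ᵥ (fun j : I => h j) = -((colSub Φ I)ᵀ *ᵥ (Φ *ᵥ restr Iᶜ h)) := by
  have hsplit : Φ *ᵥ restr I h = -(Φ *ᵥ restr Iᶜ h) := by
    rw [eq_neg_iff_add_eq_zero, ← Matrix.mulVec_add, restr_add_restr_compl, hker]
  rw [_root_.gram, ← Matrix.mulVec_mulVec, colSub_mulVec, hsplit, Matrix.mulVec_neg]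

lemma norm_colSub_transpose_mulVec_restr_le (Φ : Matrix (Fin m) (Fin N) ℝ)
    (I J : Finset (Fin N)) (x : Fin N → ℝ) :
    ‖WithLp.toLp 2 ((colSub Φ I)ᵀ *ᵥ (Φ *ᵥ restr J x))‖ ≤ ∑ i ∈ J, |x i| * √(sincSq Φ I i) := by
  rw [mulVec_restr, Matrix.mulVec_sum]
  simp only [Matrix.mulVec_smul, WithLp.toLp_sum, WithLp.toLp_smul]
  refine (norm_sum_le _ _).trans (le_of_eq ?_)
  simp [norm_smul, norm_colSub_transpose_mulVec_col]

lemma l2_restr_le_of_mulVec_eq_zero {Φ : Matrix (Fin m) (Fin N) ℝ} {I : Finset (Fin N)}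
    {h : Fin N → ℝ} {a b : ℝ} (hunit : IsUnit (gram Φ I)) (ha : specNorm (gram Φ I)⁻¹ ≤ a)
    (hb : ∀ i ∉ I, √(sincSq Φ I i) ≤ b) (hker : Φ *ᵥ h = 0) :
    l2 (restr I h) ≤ a * b * l1 (restr Iᶜ h) := by
  set w := (colSub Φ I)ᵀ *ᵥ (Φ *ᵥ restr Iᶜ h)
  have hv : (fun j : I => h j) = -((gram Φ I)⁻¹ *ᵥ w) := by
    rw [← Matrix.mulVec_neg, ← gram_mulVec_eq_neg_of_mulVec_eq_zero I hker,
      Matrix.mulVec_mulVec, Matrix.nonsing_inv_mul _ ((Matrix.isUnit_iff_isUnit_det _).mp hunit),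
      Matrix.one_mulVec]
  have hw : ‖WithLp.toLp 2 w‖ ≤ b * l1 (restr Iᶜ h) := by
    rw [l1_restr, Finset.mul_sum]
    refine (norm_colSub_transpose_mulVec_restr_le Φ I Iᶜ h).trans (Finset.sum_le_sum ?_)
    intro i hi
    rw [mul_comm b]
    exact mul_le_mul_of_nonneg_left (hb i (Finset.mem_compl.mp hi)) (abs_nonneg _)
  have ha0 : 0 ≤ a := (specNorm_eq_l2_opNorm (gram Φ I)⁻¹ ▸ norm_nonneg _).trans ha
  calc l2 (restr I h) = ‖WithLp.toLp 2 ((gram Φ I)⁻¹ *ᵥ w)‖ := by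
        rw [l2_restr, hv, WithLp.toLp_neg, norm_neg]
    _ ≤ specNorm (gram Φ I)⁻¹ * ‖WithLp.toLp 2 w‖ := norm_mulVec_le_specNorm _ _
    _ ≤ a * (b * l1 (restr Iᶜ h)) := by gcongr
    _ = a * b * l1 (restr Iᶜ h) := by ring

theorem stmt1_general (m N : ℕ) (δ ε : ℝ) (hδ1 : δ < 1)
    (Φ : Matrix (Fin m) (Fin N) ℝ)
    (I : Finset (Fin N))
    (hunit : IsUnit (gram Φ I))
    (hinv : specNorm (gram Φ I)⁻¹ ≤ 1 / (1 - δ))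
    (hsinc : ∀ i ∉ I, sincSq Φ I i ≤ (1 - δ) ^ 2 / (8 * Real.log (2 * N / ε)))
    (h : Fin N → ℝ) (hker : Φ.mulVec h = 0) :
    l2 (restr I h) ≤ (Real.sqrt (8 * Real.log (2 * N / ε)))⁻¹ * l1 (restr Iᶜ h) := by
  set s := 8 * Real.log (2 * N / ε)
  have hδ : 0 < 1 - δ := sub_pos.mpr hδ1
  have hb : ∀ i ∉ I, √(sincSq Φ I i) ≤ (1 - δ) / √s := fun i hi => by
    simpa [Real.sqrt_div (sq_nonneg _), Real.sqrt_sq hδ.le] using Real.sqrt_le_sqrt (hsinc i hi)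
  have hab : 1 / (1 - δ) * ((1 - δ) / √s) = (√s)⁻¹ := by field_simp
  simpa only [hab] using l2_restr_le_of_mulVec_eq_zero hunit hinv hb hker

/-- Lemma: bound on the on-support recovery error. -/
theorem stmt1 (m N k : ℕ) (δ ε : ℝ) (hδ0 : 0 < δ) (hδ1 : δ < 1) (hε0 : 0 < ε) (hε1 : ε < 1)
    (Φ : Matrix (Fin m) (Fin N) ℝ) (hcols : unitCols Φ)
    (I : Finset (Fin N)) (hI : I.card = k)
    (hunit : IsUnit (gram Φ I))
    (hinv : specNorm (gram Φ I)⁻¹ ≤ 1 / (1 - δ))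
    (hsinc : ∀ i ∉ I, sincSq Φ I i ≤ (1 - δ) ^ 2 / (8 * Real.log (2 * N / ε)))
    (h : Fin N → ℝ) (hker : Φ.mulVec h = 0) :
    l2 (restr I h) ≤ (Real.sqrt (8 * Real.log (2 * N / ε)))⁻¹ * l1 (restr Iᶜ h) :=
  stmt1_general m N δ ε hδ1 Φ I hunit hinv hsinc h hker
end
end

section
/- Fix I ⊆ {1,…,N} with |I| = k and δ ∈ (0,1). Suppose ‖(Φ_I^T Φ_I)^{−1}‖ ≤ 1/(1−δ) and ‖Φ_I^T φ_i‖₂² ≤ (1−δ)²/(8·log(2N/ε)) for all i ∈ I^c. Let ζ ∈ {−1,+1}^I have i.i.d. uniform entries, and set v = Φ^T Φ_I (Φ_I^T Φ_I)^{−1} ζ. Then with probability at least 1−ε over ζ, the vector v lies in the row space of Φ, satisfies v_I = ζ, and satisfies ‖v_{I^c}‖_∞ ≤ 1/2. -/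
open Finset Matrix

open scoped Classical

noncomputable section

variable {m N : ℕ}

/-- The ±1 vector on `I` associated with a Boolean vector. -/
def signVec {I : Finset (Fin N)} (b : {i // i ∈ I} → Bool) : {i // i ∈ I} → ℝ :=
  fun j => if b j then 1 else -1

/-- The dual certificate `v = Φᵀ Φ_I (Φ_Iᵀ Φ_I)⁻¹ ζ`. -/
def vvec (Φ : Matrix (Fin m) (Fin N) ℝ) (I : Finset (Fin N)) (ζ : {i // i ∈ I} → ℝ) :
    Fin N → ℝ :=
  Φᵀ.mulVec ((colSub Φ I).mulVec ((gram Φ I)⁻¹.mulVec ζ))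


/-!
On `I` the certificate reproduces `ζ`, since `Φ_Iᵀ Φ_I (Φ_Iᵀ Φ_I)⁻¹ = 1`, and it lies in the row
space of `Φ` by construction. Off `I`, each coordinate `v_i = ⟪(Φ_Iᵀ Φ_I)⁻¹ Φ_Iᵀ φ_i, ζ⟫` is a
Rademacher sum whose coefficient vector has squared norm at most
`‖(Φ_Iᵀ Φ_I)⁻¹‖² ‖Φ_Iᵀ φ_i‖² ≤ 1 / (8 log (2N/ε))`. Hoeffding's inequality, via the moment bound
`cosh x ≤ exp (x² / 2)`, bounds the probability of `|v_i| ≥ 1/2` by `2 exp (-log (2N/ε)) = ε / N`,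
and a union bound over the at most `N` indices outside `I` concludes. Probabilities are counts of
sign patterns `b : I → Bool`.
-/

section SpecNorm

variable {α β : Type*} [Fintype α] [Fintype β] (A : Matrix α β ℝ)

lemma bddAbove_specNorm_set : BddAbove
    {t : ℝ | ∃ x : β → ℝ, (∑ j, x j ^ 2) ≤ 1 ∧ t = Real.sqrt (∑ i, (∑ j, A i j * x j) ^ 2)} := by
  refine ⟨Real.sqrt (∑ i, ∑ j, A i j ^ 2), ?_⟩
  rintro t ⟨x, hx, rfl⟩
  refine Real.sqrt_le_sqrt (sum_le_sum fun i _ => ?_)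
  calc (∑ j, A i j * x j) ^ 2 ≤ (∑ j, A i j ^ 2) * ∑ j, x j ^ 2 := sum_mul_sq_le_sq_mul_sq _ _ _
    _ ≤ ∑ j, A i j ^ 2 := mul_le_of_le_one_right (by positivity) hx

lemma specNorm_nonneg : 0 ≤ specNorm A :=
  le_csSup (bddAbove_specNorm_set A) ⟨0, by simp, by simp⟩

lemma sum_sq_mulVec_le_of_sum_sq_le_one {x : β → ℝ} (hx : ∑ j, x j ^ 2 ≤ 1) :
    ∑ i, (A *ᵥ x) i ^ 2 ≤ specNorm A ^ 2 := by
  have hsqrt : Real.sqrt (∑ i, (A *ᵥ x) i ^ 2) ≤ specNorm A :=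
    le_csSup (bddAbove_specNorm_set A) ⟨x, hx, rfl⟩
  rwa [Real.sqrt_le_left (specNorm_nonneg A)] at hsqrt

lemma sum_sq_mulVec_le (x : β → ℝ) :
    ∑ i, (A *ᵥ x) i ^ 2 ≤ specNorm A ^ 2 * ∑ j, x j ^ 2 := by
  rcases (sum_nonneg fun j _ => sq_nonneg (x j)).eq_or_lt with h0 | hpos
  · have hx : x = 0 := funext fun j => by
      simpa using
        congrFun ((Fintype.sum_eq_zero_iff_of_nonneg fun j => sq_nonneg (x j)).1 h0.symm) j
    simp [hx]
  · set c := (∑ j, x j ^ 2)⁻¹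
    have hc : 0 < c := inv_pos.2 hpos
    have hunit : ∑ j, (Real.sqrt c • x) j ^ 2 ≤ 1 := by
      simp only [Pi.smul_apply, smul_eq_mul, mul_pow, Real.sq_sqrt hc.le, ← mul_sum, c,
        inv_mul_cancel₀ hpos.ne', le_refl]
    have h := sum_sq_mulVec_le_of_sum_sq_le_one A hunit
    simp only [mulVec_smul, Pi.smul_apply, smul_eq_mul, mul_pow, Real.sq_sqrt hc.le,
      ← mul_sum] at h
    rwa [mul_comm, ← le_div_iff₀ hc, div_eq_mul_inv, inv_inv] at h

end SpecNorm

lemma card_filter_mul_exp_le_sum_exp {α : Type*} (s : Finset α) (f : α → ℝ) {l : ℝ} (hl : 0 ≤ l)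
    (t : ℝ) :
    #(s.filter fun b => t ≤ f b) * Real.exp (l * t) ≤ ∑ b ∈ s, Real.exp (l * f b) := by
  calc #(s.filter fun b => t ≤ f b) * Real.exp (l * t)
      = ∑ _b ∈ s.filter fun b => t ≤ f b, Real.exp (l * t) := by
        rw [sum_const, nsmul_eq_mul]
    _ ≤ ∑ b ∈ s.filter fun b => t ≤ f b, Real.exp (l * f b) :=
        sum_le_sum fun b hb => Real.exp_le_exp.2 (mul_le_mul_of_nonneg_left (mem_filter.1 hb).2 hl)
    _ ≤ ∑ b ∈ s, Real.exp (l * f b) :=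
        sum_le_sum_of_subset_of_nonneg (filter_subset _ _) fun b _ _ => (Real.exp_pos _).le

section Rademacher

variable {J : Type*} [Fintype J]

def rademacherSum (a : J → ℝ) (b : J → Bool) : ℝ := ∑ j, a j * if b j then 1 else -1

lemma rademacherSum_neg (a : J → ℝ) (b : J → Bool) :
    rademacherSum (-a) b = -rademacherSum a b := by
  simp only [rademacherSum, Pi.neg_apply, neg_mul, sum_neg_distrib]

variable [DecidableEq J]

lemma sum_exp_mul_rademacherSum (a : J → ℝ) (l : ℝ) :
    ∑ b : J → Bool, Real.exp (l * rademacherSum a b) = ∏ j, 2 * Real.cosh (l * a j) := by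
  simp only [rademacherSum, mul_sum, Real.exp_sum]
  rw [← Fintype.prod_sum (fun j (v : Bool) => Real.exp (l * (a j * if v then 1 else -1)))]
  refine prod_congr rfl fun j _ => ?_
  simp only [Fintype.sum_bool, Real.cosh_eq, if_true, Bool.false_eq_true, if_false, mul_one,
    mul_neg]
  ring

lemma sum_exp_mul_rademacherSum_le (a : J → ℝ) (l : ℝ) :
    ∑ b : J → Bool, Real.exp (l * rademacherSum a b) ≤
      Real.exp (l ^ 2 * (∑ j, a j ^ 2) / 2) * Fintype.card (J → Bool) := by
  rw [sum_exp_mul_rademacherSum]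
  calc ∏ j, 2 * Real.cosh (l * a j) ≤ ∏ j, 2 * Real.exp ((l * a j) ^ 2 / 2) :=
        prod_le_prod (fun j _ => by positivity) fun j _ =>
          mul_le_mul_of_nonneg_left (Real.cosh_le_exp_half_sq _) zero_le_two
    _ = Real.exp (l ^ 2 * (∑ j, a j ^ 2) / 2) * Fintype.card (J → Bool) := by
        rw [prod_mul_distrib, ← Real.exp_sum, mul_comm, mul_sum, sum_div]
        simp [mul_pow]

lemma card_le_rademacherSum_le (a : J → ℝ) {t s : ℝ} (ht : 0 ≤ t) (hs : 0 < s)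
    (ha : ∑ j, a j ^ 2 ≤ s) :
    #(univ.filter fun b : J → Bool => t ≤ rademacherSum a b) ≤
      Real.exp (-t ^ 2 / (2 * s)) * Fintype.card (J → Bool) := by
  set l := t / s
  have hl : 0 ≤ l := div_nonneg ht hs.le
  have hmgf : ∑ b : J → Bool, Real.exp (l * rademacherSum a b) ≤
      Real.exp (l ^ 2 * s / 2) * Fintype.card (J → Bool) :=
    (sum_exp_mul_rademacherSum_le a l).trans <| mul_le_mul_of_nonneg_right
      (Real.exp_le_exp.2 (by gcongr)) (Nat.cast_nonneg _)
  have hchernoff := (card_filter_mul_exp_le_sum_exp univ (rademacherSum a) hl t).trans hmgf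
  have hexp : l ^ 2 * s / 2 = -t ^ 2 / (2 * s) + l * t := by
    simp only [l]; field_simp; ring
  rw [hexp, Real.exp_add, mul_right_comm] at hchernoff
  exact le_of_mul_le_mul_right hchernoff (Real.exp_pos _)

lemma card_le_abs_rademacherSum_le (a : J → ℝ) {t s : ℝ} (ht : 0 ≤ t) (hs : 0 < s)
    (ha : ∑ j, a j ^ 2 ≤ s) :
    #(univ.filter fun b : J → Bool => t ≤ |rademacherSum a b|) ≤
      2 * Real.exp (-t ^ 2 / (2 * s)) * Fintype.card (J → Bool) := by
  have hsplit : (univ.filter fun b : J → Bool => t ≤ |rademacherSum a b|) ⊆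
      (univ.filter fun b => t ≤ rademacherSum a b) ∪
        univ.filter fun b => t ≤ rademacherSum (-a) b := by
    intro b
    simp only [mem_filter, mem_univ, true_and, mem_union, rademacherSum_neg, le_abs, imp_self]
  have hneg := card_le_rademacherSum_le (-a) ht hs (by simpa using ha)
  have hpos := card_le_rademacherSum_le a ht hs ha
  calc (#(univ.filter fun b : J → Bool => t ≤ |rademacherSum a b|) : ℝ)
      ≤ #(univ.filter fun b => t ≤ rademacherSum a b) +
          #(univ.filter fun b => t ≤ rademacherSum (-a) b) := by
        exact_mod_cast (card_le_card hsplit).trans (card_union_le _ _)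
    _ ≤ 2 * Real.exp (-t ^ 2 / (2 * s)) * Fintype.card (J → Bool) := by linarith

end Rademacher

section Certificate

variable (Φ : Matrix (Fin m) (Fin N) ℝ) (I : Finset (Fin N))

def colCorr (i : Fin N) : {j // j ∈ I} → ℝ := (colSub Φ I)ᵀ *ᵥ Φᵀ i

lemma sum_colCorr_sq (i : Fin N) : ∑ j, colCorr Φ I i j ^ 2 = sincSq Φ I i :=
  sum_coe_sort I fun j => (∑ r, Φ r j * Φ r i) ^ 2

lemma transpose_gram : (gram Φ I)ᵀ = gram Φ I := by
  rw [_root_.gram, transpose_mul, transpose_transpose]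

lemma vvec_apply_of_mem (hunit : IsUnit (gram Φ I)) (ζ : {j // j ∈ I} → ℝ) (j : {j // j ∈ I}) :
    vvec Φ I ζ j = ζ j := by
  change ((colSub Φ I)ᵀ *ᵥ ((colSub Φ I) *ᵥ ((gram Φ I)⁻¹ *ᵥ ζ))) j = ζ j
  rw [mulVec_mulVec, ← _root_.gram, mulVec_mulVec,
    mul_nonsing_inv _ ((isUnit_iff_isUnit_det _).1 hunit), one_mulVec]

lemma vvec_apply (ζ : {j // j ∈ I} → ℝ) (i : Fin N) :
    vvec Φ I ζ i = ((gram Φ I)⁻¹ *ᵥ colCorr Φ I i) ⬝ᵥ ζ := by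
  change Φᵀ i ⬝ᵥ (colSub Φ I *ᵥ ((gram Φ I)⁻¹ *ᵥ ζ)) = _
  rw [dotProduct_mulVec, ← mulVec_transpose, dotProduct_mulVec, ← mulVec_transpose,
    transpose_nonsing_inv, transpose_gram, colCorr]

lemma card_le_abs_vvec_signVec_le (i : Fin N) {t s : ℝ} (ht : 0 ≤ t) (hs : 0 < s)
    (h : specNorm (gram Φ I)⁻¹ ^ 2 * sincSq Φ I i ≤ s) :
    #(univ.filter fun b : {j // j ∈ I} → Bool => t ≤ |vvec Φ I (signVec b) i|) ≤
      2 * Real.exp (-t ^ 2 / (2 * s)) * Fintype.card ({j // j ∈ I} → Bool) := by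
  have hv (b : {j // j ∈ I} → Bool) :
      vvec Φ I (signVec b) i = rademacherSum ((gram Φ I)⁻¹ *ᵥ colCorr Φ I i) b := by
    rw [vvec_apply]; rfl
  simp only [hv]
  refine card_le_abs_rademacherSum_le _ ht hs ?_
  calc ∑ j, ((gram Φ I)⁻¹ *ᵥ colCorr Φ I i) j ^ 2
      ≤ specNorm (gram Φ I)⁻¹ ^ 2 * ∑ j, colCorr Φ I i j ^ 2 := sum_sq_mulVec_le _ _
    _ ≤ s := by rwa [sum_colCorr_sq]

end Certificate

lemma card_sub_card_mul_le_card_filter_forall {α ι : Type*} (s : Finset α) (T : Finset ι)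
    (P : ι → α → Prop) [∀ i b, Decidable (P i b)] {p : ℝ}
    (h : ∀ i ∈ T, (#(s.filter fun b => ¬P i b) : ℝ) ≤ p) :
    #s - #T * p ≤ #(s.filter fun b => ∀ i ∈ T, P i b) := by
  have hsub : (s.filter fun b => ¬∀ i ∈ T, P i b) ⊆
      T.biUnion fun i => s.filter fun b => ¬P i b := by
    intro b
    simp only [mem_filter, mem_biUnion, not_forall]
    rintro ⟨hb, i, hi, hP⟩
    exact ⟨i, hi, hb, hP⟩
  have hbad : (#(s.filter fun b => ¬∀ i ∈ T, P i b) : ℝ) ≤ #T * p :=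
    calc (#(s.filter fun b => ¬∀ i ∈ T, P i b) : ℝ)
        ≤ ∑ i ∈ T, (#(s.filter fun b => ¬P i b) : ℝ) := by
          exact_mod_cast (card_le_card hsub).trans card_biUnion_le
      _ ≤ #T * p := by simpa using sum_le_sum h
  have hsplit := card_filter_add_card_filter_not (s := s) (fun b => ∀ i ∈ T, P i b)
  rw [← Nat.cast_inj (R := ℝ), Nat.cast_add] at hsplit
  linarith

lemma card_abs_vvec_signVec_gt_half_le {δ ε : ℝ} (hδ1 : δ < 1) (hε0 : 0 < ε) (hε1 : ε < 1)
    (Φ : Matrix (Fin m) (Fin N) ℝ) (I : Finset (Fin N))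
    (hinv : specNorm (gram Φ I)⁻¹ ≤ 1 / (1 - δ)) (i : Fin N)
    (hsinc : sincSq Φ I i ≤ (1 - δ) ^ 2 / (8 * Real.log (2 * N / ε))) :
    #(univ.filter fun b : {j // j ∈ I} → Bool => ¬|vvec Φ I (signVec b) i| ≤ 1 / 2) ≤
      ε / N * Fintype.card ({j // j ∈ I} → Bool) := by
  have hN : (1 : ℝ) ≤ N := by exact_mod_cast i.pos
  set L := Real.log (2 * N / ε)
  have hL : 0 < L := Real.log_pos <| by rw [lt_div_iff₀ hε0]; linarith
  have hδ : 0 < 1 - δ := by linarith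
  have hs : specNorm (gram Φ I)⁻¹ ^ 2 * sincSq Φ I i ≤ 1 / (8 * L) :=
    calc specNorm (gram Φ I)⁻¹ ^ 2 * sincSq Φ I i
        ≤ (1 / (1 - δ)) ^ 2 * ((1 - δ) ^ 2 / (8 * L)) :=
          mul_le_mul (pow_le_pow_left₀ (specNorm_nonneg _) hinv 2) hsinc
            (sum_nonneg fun _ _ => sq_nonneg _) (by positivity)
      _ = 1 / (8 * L) := by field_simp
  have htail := card_le_abs_vvec_signVec_le Φ I i (t := 1 / 2) (by norm_num) (by positivity) hs
  have hexp : 2 * Real.exp (-(1 / 2) ^ 2 / (2 * (1 / (8 * L)))) = ε / N := by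
    rw [show -(1 / 2 : ℝ) ^ 2 / (2 * (1 / (8 * L))) = -L by field_simp; ring, Real.exp_neg,
      Real.exp_log (by positivity)]
    field_simp
  rw [hexp] at htail
  refine le_trans ?_ htail
  exact_mod_cast card_le_card (monotone_filter_right _ fun _ _ hb => (not_le.1 hb).le)

theorem stmt3_general (m N : ℕ) (δ ε : ℝ) (hδ1 : δ < 1) (hε0 : 0 < ε) (hε1 : ε < 1)
    (Φ : Matrix (Fin m) (Fin N) ℝ) (I : Finset (Fin N))
    (hunit : IsUnit (gram Φ I))
    (hinv : specNorm (gram Φ I)⁻¹ ≤ 1 / (1 - δ))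
    (hsinc : ∀ i ∉ I, sincSq Φ I i ≤ (1 - δ) ^ 2 / (8 * Real.log (2 * N / ε))) :
    (1 - ε) * (((univ : Finset ({i // i ∈ I} → Bool)).card : ℝ)) ≤
      ((((univ : Finset ({i // i ∈ I} → Bool)).filter
          (fun b =>
            (∃ w : Fin m → ℝ, vvec Φ I (signVec b) = Φᵀ.mulVec w) ∧
            (∀ j : {i // i ∈ I}, vvec Φ I (signVec b) (j : Fin N) = signVec b j) ∧
            (∀ i ∉ I, |vvec Φ I (signVec b) i| ≤ 1 / 2))).card : ℝ)) := by
  have hcert (b : {i // i ∈ I} → Bool) :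
      ((∃ w : Fin m → ℝ, vvec Φ I (signVec b) = Φᵀ.mulVec w) ∧
        (∀ j : {i // i ∈ I}, vvec Φ I (signVec b) (j : Fin N) = signVec b j) ∧
        (∀ i ∉ I, |vvec Φ I (signVec b) i| ≤ 1 / 2)) ↔
      ∀ i ∈ Iᶜ, |vvec Φ I (signVec b) i| ≤ 1 / 2 := by
    simp only [mem_compl]
    exact ⟨fun h => h.2.2, fun h => ⟨⟨_, rfl⟩, vvec_apply_of_mem Φ I hunit _, h⟩⟩
  have hgood := card_sub_card_mul_le_card_filter_forall univ Iᶜ _ fun i hi =>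
    card_abs_vvec_signVec_gt_half_le hδ1 hε0 hε1 Φ I hinv i (hsinc i (mem_compl.1 hi))
  have hcompl : (#Iᶜ : ℝ) * (ε / N) ≤ ε := by
    rcases N.eq_zero_or_pos with rfl | hN
    · simpa using hε0.le
    · calc (#Iᶜ : ℝ) * (ε / N) ≤ N * (ε / N) := by
            gcongr; exact_mod_cast (card_le_univ _).trans_eq (Fintype.card_fin N)
        _ = ε := by field_simp
  set C : ℝ := (Fintype.card ({i // i ∈ I} → Bool) : ℝ)
  rw [card_univ] at hgood ⊢
  calc (1 - ε) * C ≤ C - #Iᶜ * (ε / N * C) := by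
        nlinarith [mul_le_mul_of_nonneg_right hcompl (Nat.cast_nonneg _ : (0 : ℝ) ≤ C)]
    _ ≤ _ := hgood
    _ = _ := by
        congr 2
        ext b
        simp only [mem_filter, mem_univ, true_and, hcert]

/-- Lemma: the dual certificate exists with probability `≥ 1 − ε`
over i.i.d. uniform signs. -/
theorem stmt3 (m N k : ℕ) (δ ε : ℝ) (hδ0 : 0 < δ) (hδ1 : δ < 1) (hε0 : 0 < ε) (hε1 : ε < 1)
    (Φ : Matrix (Fin m) (Fin N) ℝ) (hcols : unitCols Φ)
    (I : Finset (Fin N)) (hI : I.card = k)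
    (hunit : IsUnit (gram Φ I))
    (hinv : specNorm (gram Φ I)⁻¹ ≤ 1 / (1 - δ))
    (hsinc : ∀ i ∉ I, sincSq Φ I i ≤ (1 - δ) ^ 2 / (8 * Real.log (2 * N / ε))) :
    (1 - ε) * (((univ : Finset ({i // i ∈ I} → Bool)).card : ℝ)) ≤
      ((((univ : Finset ({i // i ∈ I} → Bool)).filter
          (fun b =>
            (∃ w : Fin m → ℝ, vvec Φ I (signVec b) = Φᵀ.mulVec w) ∧
            (∀ j : {i // i ∈ I}, vvec Φ I (signVec b) (j : Fin N) = signVec b j) ∧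
            (∀ i ∉ I, |vvec Φ I (signVec b) i| ≤ 1 / 2))).card : ℝ)) :=
  stmt3_general m N δ ε hδ1 hε0 hε1 Φ I hunit hinv hsinc
end
end

section
/- Let Φ be coherence-invariant with coherence μ and θ = μ̄², and suppose k < N/2 − 1. Let β > 0 and a ∈ (0,1) be constants and suppose μ⁴ ≤ (1−a)²β² / (32·k·(log(2N/ε))³) and θ ≤ aβ/(k·log(2N/ε)). Then Φ is (k, α, ε)-SINC with α = β/log(2N/ε). The same conclusion holds without the coherence-invariance assumption if θ = μ̄²_max. -/
open Finset Matrix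

open scoped Classical

noncomputable section

variable {m N : ℕ}

/-- Inner product of columns `i` and `j` of `Φ`. -/
def ip (Φ : Matrix (Fin m) (Fin N) ℝ) (i j : Fin N) : ℝ := ∑ r, Φ r i * Φ r j

/-- Mean square coherence `μ̄² = (1/(N(N−1))) Σ_{i≠j} μ_ij²`. -/
def mu2bar (Φ : Matrix (Fin m) (Fin N) ℝ) : ℝ :=
  (∑ i, ∑ j ∈ (univ : Finset (Fin N)).erase i, (ip Φ i j) ^ 2) / ((N : ℝ) * ((N : ℝ) - 1))

/-- Maximum average square coherence `μ̄²_max = max_j (1/(N−1)) Σ_{i≠j} μ_ij²`. -/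
def mu2max (Φ : Matrix (Fin m) (Fin N) ℝ) : ℝ :=
  sSup {t : ℝ | ∃ j : Fin N,
    t = (∑ i ∈ (univ : Finset (Fin N)).erase j, (ip Φ i j) ^ 2) / ((N : ℝ) - 1)}

/-- `Φ` is coherence-invariant: the multiset `{μ_ij : j ≠ i}` does not depend on `i`. -/
def CoherenceInvariant (Φ : Matrix (Fin m) (Fin N) ℝ) : Prop :=
  ∀ i i' : Fin N,
    Multiset.map (fun j => |ip Φ i j|) ((univ : Finset (Fin N)).erase i).val =
    Multiset.map (fun j => |ip Φ i' j|) ((univ : Finset (Fin N)).erase i').val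

/-!
Fix a column `i`. Then `‖Φ_Iᵀ φ_i‖₂²` is the sum of the weights `c_j = ⟨φ_j, φ_i⟩² ∈ [0, μ²]`
over a uniformly random `k`-subset `I` of the other `N - 1` columns, and these weights add up to at
most `(N - 1) θ`. For the exponential moment, sampling without replacement is no worse than
sampling with replacement: expanding `∏_{j ∈ I} (1 + z_j)` and using that a random `k`-subset
of an `n`-set contains a fixed `t`-set with probability at most `(k / n) ^ t` gives
`E ∏_{j ∈ I} (1 + z_j) ≤ exp ((k / n) ∑ z_j)`. Bounding `exp` by its chord on `[0, μ²]` turns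
Chernoff's bound into a Bennett-type tail, which the choice `r = (1 - a) / 2` makes at most
`ε / (2N)`; a union bound over `i` finishes. When `k μ² ≤ α` no subset violates the bound at all.
-/

theorem Real.exp_mul_le_one_add_div_mul {c M : ℝ} (hc : 0 ≤ c) (hcM : c ≤ M) (hM : 0 < M)
    (s : ℝ) :
    Real.exp (s * c) ≤ 1 + c / M * (Real.exp (s * M) - 1) := by
  have h := convexOn_exp.2 (Set.mem_univ 0) (Set.mem_univ (s * M))
    (sub_nonneg.mpr ((div_le_one hM).mpr hcM)) (div_nonneg hc hM.le) (sub_add_cancel 1 (c / M))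
  simp only [smul_eq_mul, mul_zero, zero_add, Real.exp_zero, mul_one] at h
  rw [show c / M * (s * M) = s * c by field_simp] at h
  linarith

section Sampling

variable {ι : Type*} [DecidableEq ι]

theorem Nat.descFactorial_mul_pow_le {n k : ℕ} (h : k ≤ n) (t : ℕ) :
    k.descFactorial t * n ^ t ≤ n.descFactorial t * k ^ t := by
  have hprod (a b : ℕ) : a.descFactorial t * b ^ t = ∏ i ∈ range t, ((a - i) * b) := by
    rw [Nat.descFactorial_eq_prod_range, prod_mul_distrib, prod_const, card_range]
  rw [hprod, hprod]
  refine prod_le_prod' fun i _ => ?_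
  rw [Nat.sub_mul, Nat.sub_mul, mul_comm n k]
  exact Nat.sub_le_sub_left (Nat.mul_le_mul_left i h) _

theorem Nat.choose_sub_mul_pow_le {n k t : ℕ} (htk : t ≤ k) (hkn : k ≤ n) :
    (n - t).choose (k - t) * n ^ t ≤ n.choose k * k ^ t := by
  have hpos : 0 < n.descFactorial t := by
    rw [Nat.pos_iff_ne_zero, Ne, Nat.descFactorial_eq_zero_iff_lt]; omega
  have key : n.descFactorial t * (n - t).choose (k - t) = n.choose k * k.descFactorial t := by
    rw [Nat.descFactorial_eq_factorial_mul_choose, Nat.descFactorial_eq_factorial_mul_choose,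
      mul_assoc, ← Nat.choose_mul htk]
    ring
  refine Nat.le_of_mul_le_mul_left ?_ hpos
  calc n.descFactorial t * ((n - t).choose (k - t) * n ^ t)
      = n.choose k * (k.descFactorial t * n ^ t) := by rw [← mul_assoc, key, mul_assoc]
    _ ≤ n.choose k * (n.descFactorial t * k ^ t) :=
      Nat.mul_le_mul_left _ (Nat.descFactorial_mul_pow_le hkn t)
    _ = n.descFactorial t * (n.choose k * k ^ t) := by ring

theorem card_powersetCard_filter_superset_le_choose {F T : Finset ι} (hT : T ⊆ F) (k : ℕ) :
    #{I ∈ powersetCard k F | T ⊆ I} ≤ (#F - #T).choose (k - #T) := by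
  rw [← card_sdiff_of_subset hT, ← card_powersetCard]
  refine card_le_card_of_injOn (· \ T) (fun I hI => ?_) (fun I hI J hJ hIJ => ?_)
  · simp only [coe_filter, mem_powersetCard, Set.mem_ofPred_eq] at hI
    simp only [mem_coe, mem_powersetCard]
    exact ⟨sdiff_subset_sdiff hI.1.1 le_rfl, by rw [card_sdiff_of_subset hI.2, hI.1.2]⟩
  · simp only [coe_filter, Set.mem_ofPred_eq] at hI hJ
    rw [← sdiff_union_of_subset hI.2, ← sdiff_union_of_subset hJ.2]
    exact congrArg (· ∪ T) hIJ

theorem card_powersetCard_filter_superset_le {F T : Finset ι} (hT : T ⊆ F) (k : ℕ) :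
    (#{I ∈ powersetCard k F | T ⊆ I} : ℝ) ≤ (#F).choose k * ((k : ℝ) / #F) ^ #T := by
  by_cases h : #T ≤ k ∧ k ≤ #F
  · obtain ⟨htk, hkn⟩ := h
    have hpow : (0 : ℝ) < (#F : ℝ) ^ #T := by
      rcases (#T).eq_zero_or_pos with ht | ht
      · simp [ht]
      · have : 0 < #F := by omega
        positivity
    rw [div_pow, ← mul_div_assoc, le_div_iff₀ hpow]
    calc (#{I ∈ powersetCard k F | T ⊆ I} : ℝ) * (#F : ℝ) ^ #T
        ≤ ((#F - #T).choose (k - #T) * #F ^ #T : ℕ) := by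
          push_cast
          gcongr
          exact_mod_cast card_powersetCard_filter_superset_le_choose hT k
      _ ≤ ((#F).choose k * k ^ #T : ℕ) := by exact_mod_cast Nat.choose_sub_mul_pow_le htk hkn
      _ = _ := by push_cast; rfl
  · rw [filter_eq_empty_iff.mpr fun I hI hTI => h ?_]
    · simp only [card_empty, Nat.cast_zero]; positivity
    rw [mem_powersetCard] at hI
    exact ⟨hI.2 ▸ card_le_card hTI, hI.2 ▸ card_le_card hI.1⟩

theorem sum_powersetCard_prod_one_add_le (F : Finset ι) (k : ℕ) {z : ι → ℝ} (hz : 0 ≤ z) :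
    ∑ I ∈ powersetCard k F, ∏ j ∈ I, (1 + z j) ≤
      (#F).choose k * Real.exp (k / #F * ∑ j ∈ F, z j) := by
  set w : ℝ := k / #F
  have hw : 0 ≤ w := by positivity
  calc ∑ I ∈ powersetCard k F, ∏ j ∈ I, (1 + z j)
      = ∑ I ∈ powersetCard k F, ∑ T ∈ I.powerset, ∏ j ∈ T, z j := by simp only [prod_one_add]
    _ = ∑ T ∈ F.powerset, ∑ I ∈ powersetCard k F with T ⊆ I, ∏ j ∈ T, z j := by
      refine sum_comm' fun I T => ?_
      simp only [mem_powersetCard, mem_powerset, mem_filter]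
      exact ⟨fun h => ⟨⟨h.1, h.2⟩, h.2.trans h.1.1⟩, fun h => ⟨h.1.1, h.1.2⟩⟩
    _ = ∑ T ∈ F.powerset, (∏ j ∈ T, z j) * #{I ∈ powersetCard k F | T ⊆ I} := by
      simp only [sum_const, nsmul_eq_mul, mul_comm]
    _ ≤ ∑ T ∈ F.powerset, (∏ j ∈ T, z j) * ((#F).choose k * w ^ #T) := by
      refine sum_le_sum fun T hT => ?_
      gcongr
      · exact prod_nonneg fun j _ => hz j
      · exact card_powersetCard_filter_superset_le (mem_powerset.mp hT) k
    _ = (#F).choose k * ∏ j ∈ F, (1 + w * z j) := by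
      rw [prod_one_add, mul_sum]
      refine sum_congr rfl fun T _ => ?_
      rw [prod_mul_distrib, prod_const]
      ring
    _ ≤ (#F).choose k * Real.exp (w * ∑ j ∈ F, z j) := by
      rw [mul_sum]
      gcongr
      exact Real.prod_one_add_le_exp_sum F fun j => mul_nonneg hw (hz j)

theorem card_powersetCard_filter_lt_sum_le_exp (F : Finset ι) (k : ℕ) {c : ι → ℝ} (hc : 0 ≤ c)
    {s : ℝ} (hs : 0 ≤ s) (α : ℝ) :
    (#{I ∈ powersetCard k F | α < ∑ j ∈ I, c j} : ℝ) ≤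
      (#F).choose k * Real.exp (-(s * α) + k / #F * ∑ j ∈ F, (Real.exp (s * c j) - 1)) := by
  set g : Finset ι → ℝ :=
    fun I => Real.exp (-(s * α)) * ∏ j ∈ I, (1 + (Real.exp (s * c j) - 1))
  have hg : ∀ I, g I = Real.exp (s * (∑ j ∈ I, c j - α)) := fun I => by
    simp only [g, add_sub_cancel, ← Real.exp_sum, ← Real.exp_add, ← mul_sum]
    ring_nf
  have hz : (0 : ι → ℝ) ≤ fun j => Real.exp (s * c j) - 1 := fun j => by
    simpa using Real.one_le_exp (mul_nonneg hs (hc j))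
  calc (#{I ∈ powersetCard k F | α < ∑ j ∈ I, c j} : ℝ)
      ≤ ∑ I ∈ powersetCard k F with α < ∑ j ∈ I, c j, g I := by
        rw [← nsmul_one]
        refine card_nsmul_le_sum _ _ _ fun I hI => ?_
        rw [hg]
        exact Real.one_le_exp (mul_nonneg hs (sub_nonneg.mpr (mem_filter.mp hI).2.le))
    _ ≤ ∑ I ∈ powersetCard k F, g I :=
        sum_le_sum_of_subset_of_nonneg (filter_subset _ _) fun I _ _ =>
          (hg I).symm ▸ (Real.exp_pos _).le
    _ = Real.exp (-(s * α)) *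
          ∑ I ∈ powersetCard k F, ∏ j ∈ I, (1 + (Real.exp (s * c j) - 1)) :=
        (mul_sum _ _ _).symm
    _ ≤ Real.exp (-(s * α)) *
          ((#F).choose k * Real.exp (k / #F * ∑ j ∈ F, (Real.exp (s * c j) - 1))) := by
        gcongr
        exact sum_powersetCard_prod_one_add_le F k hz
    _ = _ := by rw [Real.exp_add]; ring

theorem card_powersetCard_filter_lt_sum_le (F : Finset ι) (k : ℕ) {c : ι → ℝ} (hc : 0 ≤ c)
    {M S : ℝ} (hM : 0 < M) (hcM : ∀ j ∈ F, c j ≤ M) (hS : ∑ j ∈ F, c j ≤ S) (α : ℝ) {r : ℝ}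
    (hr : 0 ≤ r) :
    (#{I ∈ powersetCard k F | α < ∑ j ∈ I, c j} : ℝ) ≤
      (#F).choose k * Real.exp ((-(r * α) + k / #F * S * (Real.exp r - 1)) / M) := by
  have hsM : r / M * M = r := div_mul_cancel₀ r hM.ne'
  refine (card_powersetCard_filter_lt_sum_le_exp F k hc (div_nonneg hr hM.le) α).trans ?_
  gcongr
  have hsum : ∑ j ∈ F, (Real.exp (r / M * c j) - 1) ≤ S * (Real.exp r - 1) / M :=
    calc ∑ j ∈ F, (Real.exp (r / M * c j) - 1)
        ≤ ∑ j ∈ F, c j * ((Real.exp r - 1) / M) := sum_le_sum fun j hj => by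
          have := Real.exp_mul_le_one_add_div_mul (hc j) (hcM j hj) hM (r / M)
          rw [hsM] at this
          linarith [mul_div_assoc' (c j) (Real.exp r - 1) M,
            div_mul_eq_mul_div (c j) M (Real.exp r - 1)]
      _ ≤ S * ((Real.exp r - 1) / M) := by
          rw [← sum_mul]
          exact mul_le_mul_of_nonneg_right hS
            (div_nonneg (by linarith [Real.add_one_le_exp r]) hM.le)
      _ = _ := by ring
  calc -(r / M * α) + k / #F * ∑ j ∈ F, (Real.exp (r / M * c j) - 1)
      ≤ -(r / M * α) + k / #F * (S * (Real.exp r - 1) / M) := by gcongr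
    _ = _ := by ring

end Sampling

theorem bennett_exponent_le {a b α L M : ℝ} (ha0 : 0 ≤ a) (ha1 : a ≤ 1) (hα : 0 ≤ α)
    (hb : b ≤ a * α) (hM : 0 < M) (h : 4 * L * M ≤ (1 - a) ^ 2 * α) :
    (-((1 - a) / 2 * α) + b * (Real.exp ((1 - a) / 2) - 1)) / M ≤ -L := by
  set r := (1 - a) / 2 with hr_def
  have hr : |r| ≤ 1 := abs_le.mpr ⟨by linarith, by linarith⟩
  have hexp : Real.exp r - 1 ≤ r + r ^ 2 := by
    linarith [(abs_le.mp (Real.abs_exp_sub_one_sub_id_le hr)).2]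
  have hexp0 : 0 ≤ Real.exp r - 1 := by linarith [Real.add_one_le_exp r]
  rw [div_le_iff₀ hM]
  calc -(r * α) + b * (Real.exp r - 1) ≤ -(r * α) + a * α * (r + r ^ 2) := by
        gcongr
    _ = -((1 - a) ^ 2 * (2 - a) * α / 4) := by ring
    _ ≤ -((1 - a) ^ 2 * α / 4) := by
        have : 0 ≤ (1 - a) ^ 2 * α * (1 - a) := by
          have : 0 ≤ 1 - a := by linarith
          positivity
        linarith
    _ ≤ -L * M := by linarith

theorem four_mul_le_of_pow_four_le {a k L α μ : ℝ} (hL : 0 < L) (hα : 0 < α)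
    (hk : α < k * μ ^ 2) (h : μ ^ 4 ≤ (1 - a) ^ 2 * (α * L) ^ 2 / (32 * k * L ^ 3)) :
    4 * L * μ ^ 2 ≤ (1 - a) ^ 2 * α := by
  have hk0 : 0 < k := by
    by_contra hk0
    nlinarith [sq_nonneg μ]
  rw [le_div_iff₀ (by positivity)] at h
  have h' : 32 * k * L * μ ^ 4 ≤ (1 - a) ^ 2 * α ^ 2 :=
    le_of_mul_le_mul_right (by linear_combination h) (by positivity : 0 < L ^ 2)
  have h32 : 32 * L * μ ^ 2 ≤ (1 - a) ^ 2 * α := by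
    refine le_of_mul_le_mul_right ?_ hα
    calc 32 * L * μ ^ 2 * α ≤ 32 * L * μ ^ 2 * (k * μ ^ 2) := by gcongr
      _ = 32 * k * L * μ ^ 4 := by ring
      _ ≤ (1 - a) ^ 2 * α ^ 2 := h'
      _ = (1 - a) ^ 2 * α * α := by ring
  nlinarith [sq_nonneg μ]

section Coherence

variable (Φ : Matrix (Fin m) (Fin N) ℝ)

theorem ip_comm (i j : Fin N) : ip Φ i j = ip Φ j i :=
  sum_congr rfl fun _ _ => mul_comm _ _

theorem sincSq_eq_sum_sq_ip (I : Finset (Fin N)) (i : Fin N) :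
    sincSq Φ I i = ∑ j ∈ I, ip Φ j i ^ 2 := rfl

theorem sum_sq_ip_erase_le_mu2max (hN : 1 < N) (i : Fin N) :
    ∑ j ∈ univ.erase i, ip Φ j i ^ 2 ≤ (N - 1) * mu2max Φ := by
  have hN1 : (0 : ℝ) < N - 1 := by
    rw [sub_pos]; exact_mod_cast hN
  rw [← div_le_iff₀' hN1]
  refine le_csSup ?_ ⟨i, rfl⟩
  exact (Set.finite_range fun j : Fin N => (∑ i ∈ univ.erase j, ip Φ i j ^ 2) / ((N : ℝ) - 1)
    ).bddAbove.mono fun t ht => by obtain ⟨j, hj⟩ := ht; exact ⟨j, hj.symm⟩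

theorem CoherenceInvariant.sum_sq_ip_erase_eq {Φ : Matrix (Fin m) (Fin N) ℝ}
    (h : CoherenceInvariant Φ) (hN : 1 < N) (i : Fin N) :
    ∑ j ∈ univ.erase i, ip Φ j i ^ 2 = (N - 1) * mu2bar Φ := by
  have hrow (i' : Fin N) : ∑ j ∈ univ.erase i', ip Φ i' j ^ 2 =
      (((univ.erase i').val.map fun j => |ip Φ i' j|).map (· ^ 2)).sum := by
    simp [Multiset.map_map, sum_eq_multiset_sum]
  have hN0 : (N : ℝ) ≠ 0 := by positivity
  have hN1 : (N : ℝ) - 1 ≠ 0 := by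
    rw [sub_ne_zero]; exact_mod_cast hN.ne'
  rw [mu2bar, sum_congr rfl fun i' _ => (hrow i').trans (by rw [h i' i, ← hrow i]), sum_const,
    card_univ, Fintype.card_fin, nsmul_eq_mul, sum_congr rfl fun j _ => by rw [ip_comm]]
  field_simp

def badSets (k : ℕ) (α : ℝ) (i : Fin N) : Finset (Finset (Fin N)) :=
  {I ∈ powersetCard k univ | i ∉ I ∧ α < sincSq Φ I i}

theorem SINC.mono {Φ : Matrix (Fin m) (Fin N) ℝ} {k : ℕ} {α ε ε' : ℝ} (h : SINC Φ k α ε)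
    (hε : ε ≤ ε') : SINC Φ k α ε' :=
  (mul_le_mul_of_nonneg_right (by linarith) (Nat.cast_nonneg _)).trans h

theorem SINC.of_card_badSets_le {k : ℕ} {α δ : ℝ}
    (h : ∀ i, (#(badSets Φ k α i) : ℝ) ≤ δ * N.choose k) : SINC Φ k α (N * δ) := by
  set P := powersetCard k (univ : Finset (Fin N))
  have hP : (#P : ℝ) = N.choose k := by simp [P]
  have hsub : {I ∈ P | ¬∀ i ∉ I, sincSq Φ I i ≤ α} ⊆ univ.biUnion (badSets Φ k α) := by
    intro I hI
    simp only [mem_filter, not_forall, not_le] at hI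
    obtain ⟨hIP, i, hi, hlt⟩ := hI
    exact mem_biUnion.mpr ⟨i, mem_univ i, mem_filter.mpr ⟨hIP, hi, hlt⟩⟩
  have hbad : (#{I ∈ P | ¬∀ i ∉ I, sincSq Φ I i ≤ α} : ℝ) ≤ N * δ * #P :=
    calc (#{I ∈ P | ¬∀ i ∉ I, sincSq Φ I i ≤ α} : ℝ) ≤ ∑ i, (#(badSets Φ k α i) : ℝ) := by
          exact_mod_cast (card_le_card hsub).trans card_biUnion_le
      _ ≤ ∑ _i : Fin N, δ * N.choose k := sum_le_sum fun i _ => h i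
      _ = N * δ * #P := by simp [hP, mul_assoc]
  have hsplit : (#{I ∈ P | ∀ i ∉ I, sincSq Φ I i ≤ α} : ℝ) +
      #{I ∈ P | ¬∀ i ∉ I, sincSq Φ I i ≤ α} = #P := by
    exact_mod_cast card_filter_add_card_filter_not _
  unfold SINC
  linarith

theorem badSets_eq_empty {k : ℕ} {α M : ℝ} {i : Fin N} (hM : ∀ j ≠ i, ip Φ j i ^ 2 ≤ M)
    (h : k * M ≤ α) : badSets Φ k α i = ∅ := by
  refine filter_eq_empty_iff.mpr fun I hI ⟨hi, hlt⟩ => hlt.not_ge ?_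
  rw [mem_powersetCard] at hI
  calc sincSq Φ I i = ∑ j ∈ I, ip Φ j i ^ 2 := sincSq_eq_sum_sq_ip Φ I i
    _ ≤ #I • M :=
        sum_le_card_nsmul _ _ _ fun j hj => hM j (ne_of_mem_of_not_mem hj hi)
    _ = k * M := by rw [hI.2, nsmul_eq_mul]
    _ ≤ α := h

theorem card_badSets_le (hN : 1 < N) (k : ℕ) (α : ℝ) {i : Fin N} {M θ r : ℝ} (hM : 0 < M)
    (hcM : ∀ j ≠ i, ip Φ j i ^ 2 ≤ M) (hrow : ∑ j ∈ univ.erase i, ip Φ j i ^ 2 ≤ (N - 1) * θ)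
    (hr : 0 ≤ r) :
    (#(badSets Φ k α i) : ℝ) ≤
      N.choose k * Real.exp ((-(r * α) + k * θ * (Real.exp r - 1)) / M) := by
  have hF : ((#(univ.erase i) : ℕ) : ℝ) = N - 1 := by
    rw [card_erase_of_mem (mem_univ i), card_univ, Fintype.card_fin, Nat.cast_sub hN.le,
      Nat.cast_one]
  have hsub : badSets Φ k α i ⊆
      {I ∈ powersetCard k (univ.erase i) | α < ∑ j ∈ I, ip Φ j i ^ 2} := by
    intro I hI
    simp only [badSets, mem_filter, mem_powersetCard] at hI ⊢
    exact ⟨⟨subset_erase.mpr ⟨hI.1.1, hI.2.1⟩, hI.1.2⟩, sincSq_eq_sum_sq_ip Φ I i ▸ hI.2.2⟩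
  have hchoose : ((#(univ.erase i)).choose k : ℝ) ≤ N.choose k := by
    exact_mod_cast Nat.choose_le_choose k
      (card_erase_le.trans (card_univ.trans (Fintype.card_fin N)).le)
  have hkθ : (k : ℝ) / #(univ.erase i) * ((N - 1) * θ) = k * θ := by
    have hN1 : (N : ℝ) - 1 ≠ 0 := by
      rw [sub_ne_zero]; exact_mod_cast hN.ne'
    rw [hF]
    field_simp
  calc (#(badSets Φ k α i) : ℝ)
      ≤ #{I ∈ powersetCard k (univ.erase i) | α < ∑ j ∈ I, ip Φ j i ^ 2} := by
        exact_mod_cast card_le_card hsub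
    _ ≤ _ := card_powersetCard_filter_lt_sum_le _ k (fun j => sq_nonneg (ip Φ j i)) hM
        (fun j hj => hcM j (ne_of_mem_erase hj)) hrow α hr
    _ ≤ _ := by
        rw [hkθ]
        gcongr

end Coherence

theorem stmt8_general (m N k : ℕ) (hk : (k : ℝ) < N / 2 - 1)
    (ε β a μ θ : ℝ) (hε0 : 0 < ε) (hε1 : ε < 1) (hβ : 0 < β) (ha0 : 0 < a) (ha1 : a < 1)
    (Φ : Matrix (Fin m) (Fin N) ℝ)
    -- `μ` is the coherence of `Φ`
    (hμ : ∀ i j : Fin N, i ≠ j → |ip Φ i j| ≤ μ)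
    -- `θ = μ̄²` when `Φ` is coherence-invariant, and `θ = μ̄²_max` in general
    (hθ : (CoherenceInvariant Φ ∧ θ = mu2bar Φ) ∨ θ = mu2max Φ)
    (h1 : μ ^ 4 ≤ (1 - a) ^ 2 * β ^ 2 / (32 * k * (Real.log (2 * N / ε)) ^ 3))
    (h2 : θ ≤ a * β / (k * Real.log (2 * N / ε))) :
    SINC Φ k (β / Real.log (2 * N / ε)) ε := by
  have hN : 2 < N := by exact_mod_cast (by linarith [k.cast_nonneg (α := ℝ)] : (2 : ℝ) < N)
  set L := Real.log (2 * N / ε)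
  have hL : 0 < L :=
    Real.log_pos ((one_lt_div hε0).mpr (by linarith [(by exact_mod_cast hN : (2 : ℝ) < N)]))
  set α := β / L with hα_def
  have hα : 0 < α := div_pos hβ hL
  have hM (i j : Fin N) (hij : j ≠ i) : ip Φ j i ^ 2 ≤ μ ^ 2 := by
    simpa only [sq_abs] using pow_le_pow_left₀ (abs_nonneg _) (hμ j i hij) 2
  have hrow (i : Fin N) : ∑ j ∈ univ.erase i, ip Φ j i ^ 2 ≤ (N - 1) * θ := by
    rcases hθ with ⟨hCI, rfl⟩ | rfl
    exacts [(hCI.sum_sq_ip_erase_eq (by omega) i).le, sum_sq_ip_erase_le_mu2max Φ (by omega) i]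
  refine (SINC.of_card_badSets_le Φ (δ := ε / (2 * N)) fun i => ?_).mono
    (by field_simp; linarith)
  rcases le_or_gt (k * μ ^ 2) α with hdet | hrand
  · rw [badSets_eq_empty Φ (hM i) hdet, card_empty, Nat.cast_zero]
    positivity
  have hμ2 : 0 < μ ^ 2 := by nlinarith
  have hkθ : k * θ ≤ a * α := by
    rw [le_div_iff₀ (by nlinarith)] at h2
    rw [hα_def, ← mul_div_assoc, le_div_iff₀ hL]
    linarith
  have hβL : β = α * L := by rw [hα_def, div_mul_cancel₀ β hL.ne']
  rw [hβL] at h1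
  calc (#(badSets Φ k α i) : ℝ)
      ≤ N.choose k *
          Real.exp ((-((1 - a) / 2 * α) + k * θ * (Real.exp ((1 - a) / 2) - 1)) / μ ^ 2) :=
        card_badSets_le Φ (by omega) k α hμ2 (hM i) (hrow i) (by linarith)
    _ ≤ N.choose k * Real.exp (-L) := by
        gcongr
        exact bennett_exponent_le ha0.le ha1.le hα.le hkθ hμ2
          (four_mul_le_of_pow_four_le hL hα hrand h1)
    _ = ε / (2 * N) * N.choose k := by
        rw [Real.exp_neg, Real.exp_log (by positivity), inv_div, mul_comm]

/-- Theorem: coherence conditions implying the SINC property. -/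
theorem stmt8 (m N k : ℕ) (hk : (k : ℝ) < N / 2 - 1)
    (ε β a μ θ : ℝ) (hε0 : 0 < ε) (hε1 : ε < 1) (hβ : 0 < β) (ha0 : 0 < a) (ha1 : a < 1)
    (Φ : Matrix (Fin m) (Fin N) ℝ) (hcols : unitCols Φ)
    -- `μ` is the coherence of `Φ`
    (hμ : ∀ i j : Fin N, i ≠ j → |ip Φ i j| ≤ μ)
    -- `θ = μ̄²` when `Φ` is coherence-invariant, and `θ = μ̄²_max` in general
    (hθ : (CoherenceInvariant Φ ∧ θ = mu2bar Φ) ∨ θ = mu2max Φ)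
    (h1 : μ ^ 4 ≤ (1 - a) ^ 2 * β ^ 2 / (32 * k * (Real.log (2 * N / ε)) ^ 3))
    (h2 : θ ≤ a * β / (k * Real.log (2 * N / ε))) :
    SINC Φ k (β / Real.log (2 * N / ε)) ε :=
  stmt8_general m N k hk ε β a μ θ hε0 hε1 hβ ha0 ha1 Φ hμ hθ h1 h2
end
end

section
/- Fix j ∈ {1,…,N}, assume k < N − 2, and let (i₁,…,i_k) be a uniformly random ordered k-tuple of distinct indices from {1,…,N}\{j}. Set Y_l = μ_{j,i_l}² for l = 1,…,k, Z₀ = E[Σ_{l=1}^k Y_l], and Z_t = E[Σ_{l=1}^k Y_l | Y₁,…,Y_t] for t = 1,…,k. Then (Z_t)_{t=0,…,k} is a martingale with respect to the filtration generated by Y₁,…,Y_t, and |Z_t − Z_{t−1}| ≤ 2μ²·(N−2)/(N−k−2) = 2μ²·(1 + k/(N−k−2)) for every t = 1,…,k. -/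
open Finset Matrix

open scoped Classical

noncomputable section

variable {m N : ℕ}

open MeasureTheory
open scoped ENNReal

/-- Ordered `k`-tuples of distinct indices from `{1,…,N} \ {j}`. -/
def OmegaT (N k : ℕ) (j : Fin N) : Type :=
  {f : Fin k → Fin N // Function.Injective f ∧ ∀ l, f l ≠ j}

instance (N k : ℕ) (j : Fin N) : Fintype (OmegaT N k j) := by
  unfold OmegaT; infer_instance

instance (N k : ℕ) (j : Fin N) : MeasurableSpace (OmegaT N k j) := ⊤

/-- The uniform probability measure on ordered `k`-tuples. -/
def unifT (N k : ℕ) (j : Fin N) : Measure (OmegaT N k j) :=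
  (Fintype.card (OmegaT N k j) : ℝ≥0∞)⁻¹ • Measure.count

/-- The filtration generated by `Y₁, …, Y_t`. -/
def filtY {Ω : Type} {k : ℕ} (Y : Fin k → Ω → ℝ) :
    Filtration ℕ (⊤ : MeasurableSpace Ω) where
  seq := fun t => ⨆ l : {l : Fin k // (l : ℕ) < t},
    MeasurableSpace.comap (Y l) inferInstance
  mono' := fun s t hst =>
    iSup_le fun l => le_iSup_of_le ⟨l.1, lt_of_lt_of_le l.2 hst⟩ le_rfl
  le' := fun _ => le_top

/-!
Write `f i = μ_{j,i}²` and `T = ∑_{i ≠ j} f i`. Given the first `t` entries of the tuple, each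
of the `k - t` later entries is uniform over the `N - 1 - t` indices not yet used, so
`Z_t = σ_t + (k - t) (T - σ_t) / (N - 1 - t)` with `σ_t = Y₁ + ⋯ + Y_t`. To check this against
every set `A` of the filtration, double count the triples `(ω, l, v)` with `ω ∈ A`, `l ≥ t` and
`v` an index unused by `ω`: the swap `(ω, l, v) ↦ (ω[l ↦ v], l, ω l)` is an involution of these
triples, because `A` only sees the first `t` entries. Consecutive values then differ by
`(N - 1 - k) / (N - 2 - t) · (Y_{t+1} - (T - σ_t) / (N - 1 - t))`, a fraction of the gap between
two numbers in `[0, μ²]`, so `|Z_{t+1} - Z_t| ≤ μ²`.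
-/

namespace OmegaT

variable {N k : ℕ} {j : Fin N}

def freeIdx (t : ℕ) (ω : OmegaT N k j) : Finset (Fin N) :=
  univ.erase j \ (univ.filter fun l : Fin k => l.val < t).image ω.1

def prefixSum (f : Fin N → ℝ) (t : ℕ) (ω : OmegaT N k j) : ℝ :=
  ∑ l : Fin k with l.val < t, f (ω.1 l)

def condExpSum (f : Fin N → ℝ) (t : ℕ) (ω : OmegaT N k j) : ℝ :=
  ω.prefixSum f t +
    ((k : ℝ) - t) * (∑ i ∈ univ.erase j, f i - ω.prefixSum f t) / ((N : ℝ) - 1 - t)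

lemma mem_freeIdx {t : ℕ} {ω : OmegaT N k j} {v : Fin N} :
    v ∈ ω.freeIdx t ↔ v ≠ j ∧ ∀ l : Fin k, l.val < t → ω.1 l ≠ v := by
  simp [freeIdx]

lemma image_prefix_subset (t : ℕ) (ω : OmegaT N k j) :
    (univ.filter fun l : Fin k => l.val < t).image ω.1 ⊆ univ.erase j := by
  simpa [Finset.subset_iff] using fun l _ => ω.2.2 l

lemma card_freeIdx {t : ℕ} (ht : t ≤ k) (ω : OmegaT N k j) :
    (ω.freeIdx t).card = N - 1 - t := by
  rw [freeIdx, card_sdiff_of_subset (image_prefix_subset t ω), card_erase_of_mem (mem_univ j),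
    card_image_of_injective _ ω.2.1, Fin.card_filter_val_lt, min_eq_right ht, card_univ,
    Fintype.card_fin]

lemma sum_freeIdx (f : Fin N → ℝ) (t : ℕ) (ω : OmegaT N k j) :
    ∑ i ∈ ω.freeIdx t, f i = ∑ i ∈ univ.erase j, f i - ω.prefixSum f t := by
  rw [freeIdx, sum_sdiff_eq_sub (image_prefix_subset t ω),
    sum_image fun _ _ _ _ h => ω.2.1 h, prefixSum]

lemma prefixSum_add_sum_tail (f : Fin N → ℝ) (t : ℕ) (ω : OmegaT N k j) :
    ω.prefixSum f t + ∑ l : Fin k with t ≤ l.val, f (ω.1 l) = ∑ l, f (ω.1 l) := by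
  simpa only [prefixSum, not_lt] using
    sum_filter_add_sum_filter_not univ (fun l : Fin k => l.val < t) _

lemma prefixSum_self (f : Fin N → ℝ) (ω : OmegaT N k j) :
    ω.prefixSum f k = ∑ l, f (ω.1 l) := by
  rw [prefixSum, filter_true_of_mem fun l _ => l.2]

lemma prefixSum_succ (f : Fin N → ℝ) {t : ℕ} (ht : t < k) (ω : OmegaT N k j) :
    ω.prefixSum f (t + 1) = ω.prefixSum f t + f (ω.1 ⟨t, ht⟩) := by
  have hfilter : (univ.filter fun l : Fin k => l.val < t + 1) =
      insert ⟨t, ht⟩ (univ.filter fun l : Fin k => l.val < t) := by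
    ext l; simp only [mem_filter, mem_univ, true_and, mem_insert, Fin.ext_iff]; omega
  rw [prefixSum, hfilter, sum_insert (by simp), prefixSum, add_comm]

def replace (ω : OmegaT N k j) (l : Fin k) (v : Fin N) (hv : v ∈ ω.freeIdx k) :
    OmegaT N k j :=
  ⟨Function.update ω.1 l v, by
    have hv' : ∀ a, ω.1 a ≠ v := fun a => (mem_freeIdx.1 hv).2 a a.2
    intro a b hab
    by_cases ha : a = l <;> by_cases hb : b = l
    · rw [ha, hb]
    · subst ha
      rw [Function.update_self, Function.update_of_ne hb] at hab
      exact absurd hab.symm (hv' b)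
    · subst hb
      rw [Function.update_self, Function.update_of_ne ha] at hab
      exact absurd hab (hv' a)
    · rw [Function.update_of_ne ha, Function.update_of_ne hb] at hab
      exact ω.2.1 hab,
  fun a => by
    rcases eq_or_ne a l with rfl | ha
    · simpa only [Function.update_self] using (mem_freeIdx.1 hv).1
    · simpa only [Function.update_of_ne ha] using ω.2.2 a⟩

lemma replace_apply (ω : OmegaT N k j) (l : Fin k) (v : Fin N) (hv : v ∈ ω.freeIdx k)
    (a : Fin k) : (ω.replace l v hv).1 a = Function.update ω.1 l v a := rfl

lemma apply_mem_freeIdx_replace (ω : OmegaT N k j) (l : Fin k) (v : Fin N)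
    (hv : v ∈ ω.freeIdx k) : ω.1 l ∈ (ω.replace l v hv).freeIdx k := by
  refine mem_freeIdx.2 ⟨ω.2.2 l, fun a _ => ?_⟩
  rcases eq_or_ne a l with rfl | ha
  · simpa [replace_apply] using ((mem_freeIdx.1 hv).2 a a.2).symm
  · simpa [replace_apply, ha] using fun h => ha (ω.2.1 h)

lemma replace_replace (ω : OmegaT N k j) (l : Fin k) (v : Fin N) (hv : v ∈ ω.freeIdx k) :
    (ω.replace l v hv).replace l (ω.1 l) (ω.apply_mem_freeIdx_replace l v hv) = ω :=
  Subtype.ext <| by simp [replace]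

def ReplaceClosed (t : ℕ) (A : Set (OmegaT N k j)) : Prop :=
  ∀ ω ∈ A, ∀ l : Fin k, t ≤ l.val → ∀ v (hv : v ∈ ω.freeIdx k), ω.replace l v hv ∈ A

lemma sum_tail_freeIdx_swap (f : Fin N → ℝ) {t : ℕ} (A : Finset (OmegaT N k j))
    (hA : ReplaceClosed t (A : Set (OmegaT N k j))) :
    ∑ ω ∈ A, ∑ l : Fin k with t ≤ l.val, ∑ _v ∈ ω.freeIdx k, f (ω.1 l) =
      ∑ ω ∈ A, ∑ l : Fin k with t ≤ l.val, ∑ v ∈ ω.freeIdx k, f v := by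
  set L := univ.filter fun l : Fin k => t ≤ l.val
  have hsigma : ∀ g : OmegaT N k j → Fin k → Fin N → ℝ,
      ∑ ω ∈ A, ∑ l ∈ L, ∑ v ∈ ω.freeIdx k, g ω l v =
        ∑ x ∈ A.sigma fun ω => L ×ˢ ω.freeIdx k, g x.1 x.2.1 x.2.2 := fun g => by
    simp only [sum_sigma, sum_product]
  have mem : ∀ x : (_ : OmegaT N k j) × (Fin k × Fin N),
      x ∈ A.sigma (fun ω => L ×ˢ ω.freeIdx k) ↔
        x.1 ∈ A ∧ t ≤ x.2.1.val ∧ x.2.2 ∈ x.1.freeIdx k :=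
    fun x => by simp [L]
  rw [hsigma, hsigma]
  let swap : ∀ x ∈ A.sigma (fun ω => L ×ˢ ω.freeIdx k),
      (_ : OmegaT N k j) × (Fin k × Fin N) :=
    fun x hx => ⟨x.1.replace x.2.1 x.2.2 ((mem x).1 hx).2.2, x.2.1, x.1.1 x.2.1⟩
  have swap_mem : ∀ x hx, swap x hx ∈ A.sigma (fun ω => L ×ˢ ω.freeIdx k) := fun x hx => by
    obtain ⟨hω, hl, hv⟩ := (mem x).1 hx
    exact (mem _).2 ⟨hA _ hω _ hl _ hv, hl, x.1.apply_mem_freeIdx_replace _ _ hv⟩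
  have swap_swap : ∀ x hx, swap (swap x hx) (swap_mem x hx) = x := fun x hx =>
    Sigma.ext (replace_replace _ _ _ ((mem x).1 hx).2.2)
      (heq_of_eq (Prod.ext rfl (by simp [swap, replace_apply])))
  exact sum_bij' swap swap swap_mem swap_mem swap_swap swap_swap fun x hx => rfl

lemma card_mul_sum_sub_prefixSum_eq (f : Fin N → ℝ) (hk : k < N) {t : ℕ} (ht : t ≤ k)
    (A : Finset (OmegaT N k j))
    (hA : ReplaceClosed t (A : Set (OmegaT N k j))) :
    ((N : ℝ) - 1 - k) * ∑ ω ∈ A, (∑ l, f (ω.1 l) - ω.prefixSum f t) =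
      ((k : ℝ) - t) * ∑ ω ∈ A, (∑ i ∈ univ.erase j, f i - ∑ l, f (ω.1 l)) := by
  have hcard : (univ.filter fun l : Fin k => t ≤ l.val).card = k - t := by
    have := card_filter_add_card_filter_not (s := (univ : Finset (Fin k))) (fun l => l.val < t)
    simp only [not_lt, Fin.card_filter_val_lt, min_eq_right ht, card_univ,
      Fintype.card_fin] at this
    omega
  have htail : ∀ ω : OmegaT N k j,
      ∑ l : Fin k with t ≤ l.val, f (ω.1 l) = ∑ l, f (ω.1 l) - ω.prefixSum f t :=
    fun ω => eq_sub_of_add_eq' (prefixSum_add_sum_tail f t ω)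
  have h := sum_tail_freeIdx_swap f A hA
  simp only [sum_const, card_freeIdx le_rfl, nsmul_eq_mul, sum_freeIdx, prefixSum_self, hcard,
    htail, ← mul_sum] at h
  rwa [Nat.cast_sub ht, Nat.sub_sub, Nat.cast_sub (by omega), Nat.cast_add, Nat.cast_one,
    ← sub_sub] at h

lemma sum_condExpSum_eq (f : Fin N → ℝ) (hk : k + 1 < N) {t : ℕ} (ht : t ≤ k)
    (A : Finset (OmegaT N k j))
    (hA : ReplaceClosed t (A : Set (OmegaT N k j))) :
    ∑ ω ∈ A, ω.condExpSum f t = ∑ ω ∈ A, ∑ l, f (ω.1 l) := by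
  have h := card_mul_sum_sub_prefixSum_eq f (by omega) ht A hA
  have hd : (N : ℝ) - 1 - t ≠ 0 := by
    have : (t : ℝ) + 1 < N := by exact_mod_cast (by omega : t + 1 < N)
    linarith
  simp only [condExpSum, sum_add_distrib, ← sum_div, ← mul_sum, sum_sub_distrib] at h ⊢
  field_simp
  linear_combination -h

lemma replaceClosed_of_measurableSet (f : Fin N → ℝ) {t : ℕ} {s : Set (OmegaT N k j)}
    (hs : MeasurableSet[filtY (fun l (ω : OmegaT N k j) => f (ω.1 l)) t] s) :
    ReplaceClosed t s := by
  let head : OmegaT N k j → {l : Fin k // (l : ℕ) < t} → Fin N := fun ω l => ω.1 l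
  have hle :
      filtY (fun l (ω : OmegaT N k j) => f (ω.1 l)) t ≤ MeasurableSpace.comap head ⊤ :=
    iSup_le fun l => Measurable.comap_le <|
      (measurable_from_top (f := fun p : {l : Fin k // (l : ℕ) < t} → Fin N => f (p l))).comp
        (comap_measurable head)
  obtain ⟨B, -, rfl⟩ := hle s hs
  intro ω hω l hl v hv
  have : head (ω.replace l v hv) = head ω := funext fun l' => by
    simp [head, replace_apply, Function.update_of_ne (Fin.ne_of_lt (l'.2.trans_le hl))]
  simpa [Set.mem_preimage, this] using hω

lemma measurable_prefixSum (f : Fin N → ℝ) (t : ℕ) :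
    Measurable[filtY (fun l (ω : OmegaT N k j) => f (ω.1 l)) t] (prefixSum f t) :=
  Finset.measurable_sum _ fun l hl =>
    (comap_measurable _).mono (le_iSup_of_le ⟨l, (mem_filter.1 hl).2⟩ le_rfl) le_rfl

lemma measurable_condExpSum (f : Fin N → ℝ) (t : ℕ) :
    Measurable[filtY (fun l (ω : OmegaT N k j) => f (ω.1 l)) t] (condExpSum f t) :=
  have h := measurable_prefixSum f t
  h.add (((measurable_const.sub h).const_mul _).div_const _)

instance : IsFiniteMeasure (unifT N k j) := by
  constructor
  rw [unifT, Measure.smul_apply, Measure.count_univ, smul_eq_mul, ENat.card_eq_coe_fintype_card,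
    ENat.toENNReal_coe]
  exact (ENNReal.inv_mul_le_one _).trans_lt ENNReal.one_lt_top

lemma setIntegral_unifT (g : OmegaT N k j → ℝ) (s : Finset (OmegaT N k j)) :
    ∫ ω in ↑s, g ω ∂unifT N k j = (Fintype.card (OmegaT N k j) : ℝ)⁻¹ * ∑ ω ∈ s, g ω := by
  rw [setIntegral_finset s Integrable.of_finite.integrableOn, mul_sum]
  simp [unifT]

theorem condExpSum_ae_eq_condExp (f : Fin N → ℝ) (hk : k + 1 < N) {t : ℕ} (ht : t ≤ k) :
    condExpSum f t =ᵐ[unifT N k j]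
      (unifT N k j)[fun ω => ∑ l, f (ω.1 l) |
        filtY (fun l (ω : OmegaT N k j) => f (ω.1 l)) t] := by
  have hm := (filtY fun l (ω : OmegaT N k j) => f (ω.1 l)).le t
  have := isFiniteMeasure_trim (μ := unifT N k j) hm
  refine ae_eq_condExp_of_forall_setIntegral_eq hm Integrable.of_finite
    (fun _ _ _ => Integrable.of_finite.integrableOn) (fun s hs _ => ?_)
    (measurable_condExpSum f t).aestronglyMeasurable
  rw [← s.coe_toFinset, setIntegral_unifT, setIntegral_unifT, sum_condExpSum_eq f hk ht]
  rw [Set.coe_toFinset]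
  exact replaceClosed_of_measurableSet f hs

lemma abs_condExpSum_succ_sub_le (f : Fin N → ℝ) {a b : ℝ}
    (hf : ∀ i, i ≠ j → f i ∈ Set.Icc a b) (hk : k + 1 < N) {t : ℕ} (ht : t < k) (ω : OmegaT N k j) :
    |ω.condExpSum f (t + 1) - ω.condExpSum f t| ≤ b - a := by
  set Y := f (ω.1 ⟨t, ht⟩) with hY_def
  set R := ∑ i ∈ univ.erase j, f i - ω.prefixSum f t with hR_def
  have htN : (t : ℝ) + 2 < N := by exact_mod_cast (by omega : t + 2 < N)
  have hkt : (t : ℝ) + 1 ≤ k := by exact_mod_cast ht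
  have hkN : (k : ℝ) + 1 < N := by exact_mod_cast hk
  have key : ω.condExpSum f (t + 1) - ω.condExpSum f t =
      ((N - 1 - k) / (N - 2 - t)) * (Y - R / (N - 1 - t)) := by
    have h1 : (N : ℝ) - 1 - ↑(t + 1) = N - 2 - t := by push_cast; ring
    have h2 : (N : ℝ) - 2 - t ≠ 0 := by linarith
    have h3 : (N : ℝ) - 1 - t ≠ 0 := by linarith
    rw [hY_def, hR_def, condExpSum, condExpSum, prefixSum_succ f ht, h1]
    push_cast
    field_simp
    ring
  have hY : Y ∈ Set.Icc a b := hf _ (ω.2.2 _)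
  have hR : R / (N - 1 - t) ∈ Set.Icc a b := by
    have hcard : ((ω.freeIdx t).card : ℝ) = N - 1 - t := by
      rw [card_freeIdx ht.le, Nat.cast_sub (by omega), Nat.cast_sub (by omega), Nat.cast_one]
    have hlo := card_nsmul_le_sum (ω.freeIdx t) f a fun i hi => (hf i (mem_freeIdx.1 hi).1).1
    have hhi := sum_le_card_nsmul (ω.freeIdx t) f b fun i hi => (hf i (mem_freeIdx.1 hi).1).2
    rw [nsmul_eq_mul, hcard, sum_freeIdx] at hlo hhi
    constructor
    · rw [le_div_iff₀ (by linarith)]; linarith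
    · rw [div_le_iff₀ (by linarith)]; linarith
  have hc : 0 ≤ ((N : ℝ) - 1 - k) / (N - 2 - t) ∧ ((N : ℝ) - 1 - k) / (N - 2 - t) ≤ 1 :=
    ⟨div_nonneg (by linarith) (by linarith), (div_le_one (by linarith)).2 (by linarith)⟩
  rw [key, abs_mul, abs_of_nonneg hc.1]
  calc _ ≤ 1 * (b - a) :=
        mul_le_mul hc.2 (abs_sub_le_iff.2 ⟨by linarith [hY.2, hR.1], by linarith [hY.1, hR.2]⟩)
          (abs_nonneg _) zero_le_one
    _ = b - a := one_mul _

end OmegaT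

theorem stmt9_general (m N k : ℕ) (hk : k < N - 2) (j : Fin N)
    (Φ : Matrix (Fin m) (Fin N) ℝ)
    (μ : ℝ)
    -- `μ` is the coherence of `Φ`
    (hμ : ∀ i i' : Fin N, i ≠ i' → |ip Φ i i'| ≤ μ) :
    let Y : Fin k → OmegaT N k j → ℝ := fun l ω => (ip Φ j (ω.1 l)) ^ 2
    let S : OmegaT N k j → ℝ := fun ω => ∑ l, Y l ω
    let Z : ℕ → OmegaT N k j → ℝ := fun t => (unifT N k j)[S | filtY Y t]
    Martingale Z (filtY Y) (unifT N k j) ∧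
      ∀ t : ℕ, 1 ≤ t → t ≤ k →
        ∀ᵐ ω ∂(unifT N k j),
          |Z t ω - Z (t - 1) ω| ≤ 2 * μ ^ 2 * ((N : ℝ) - 2) / ((N : ℝ) - k - 2) := by
  intro Y S Z
  refine ⟨martingale_condExp S (filtY Y) _, fun t ht₁ htk => ?_⟩
  obtain ⟨s, rfl⟩ : ∃ s, t = s + 1 := ⟨t - 1, by omega⟩
  let f : Fin N → ℝ := fun i => ip Φ j i ^ 2
  have hf : ∀ i, i ≠ j → f i ∈ Set.Icc 0 (μ ^ 2) := fun i hi =>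
    ⟨sq_nonneg _, sq_le_sq.2 ((hμ j i hi.symm).trans (le_abs_self μ))⟩
  have hkN : (k : ℝ) + 2 < N := by exact_mod_cast (by omega : k + 2 < N)
  filter_upwards [OmegaT.condExpSum_ae_eq_condExp f (by omega) htk,
    OmegaT.condExpSum_ae_eq_condExp f (by omega) (by omega : s ≤ k)] with ω h₁ h₀
  have e₁ : Z (s + 1) ω = ω.condExpSum f (s + 1) := h₁.symm
  have e₀ : Z (s + 1 - 1) ω = ω.condExpSum f s := h₀.symm
  calc |Z (s + 1) ω - Z (s + 1 - 1) ω| ≤ μ ^ 2 - 0 := by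
        rw [e₁, e₀]; exact OmegaT.abs_condExpSum_succ_sub_le f hf (by omega) (by omega) ω
    _ ≤ 2 * μ ^ 2 * ((N : ℝ) - 2) / ((N : ℝ) - k - 2) := by
        rw [sub_zero, le_div_iff₀ (by linarith)]
        nlinarith [sq_nonneg μ, (Nat.cast_nonneg k : (0 : ℝ) ≤ k)]

/-- Lemma: `(Z_t)` is a bounded-differences martingale. -/
theorem stmt9 (m N k : ℕ) (hk : k < N - 2) (j : Fin N)
    (Φ : Matrix (Fin m) (Fin N) ℝ) (hcols : unitCols Φ)
    (μ : ℝ)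
    -- `μ` is the coherence of `Φ`
    (hμ : ∀ i i' : Fin N, i ≠ i' → |ip Φ i i'| ≤ μ) :
    let Y : Fin k → OmegaT N k j → ℝ := fun l ω => (ip Φ j (ω.1 l)) ^ 2
    let S : OmegaT N k j → ℝ := fun ω => ∑ l, Y l ω
    let Z : ℕ → OmegaT N k j → ℝ := fun t => (unifT N k j)[S | filtY Y t]
    Martingale Z (filtY Y) (unifT N k j) ∧
      ∀ t : ℕ, 1 ≤ t → t ≤ k →
        ∀ᵐ ω ∂(unifT N k j),
          |Z t ω - Z (t - 1) ω| ≤ 2 * μ ^ 2 * ((N : ℝ) - 2) / ((N : ℝ) - k - 2) :=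
  stmt9_general m N k hk j Φ μ hμ
end
end

section
/- Let F be the N×N discrete Fourier transform matrix with entries F_{jk} = (1/√N)·e^{2πijk/N}, let M be a nonempty subset of {1,…,N}, and let Φ be the |M|×N matrix obtained by keeping the rows of F indexed by M and rescaling so that each column has unit ℓ₂ norm (i.e., Φ = √(N/|M|) · F_M). Then Φ is coherence-invariant, i.e., the multiset {μ_jk : k ≠ j} of coherences μ_jk = |⟨φ_j, φ_k⟩| (Hermitian inner product of the columns) does not depend on j, and the mean square coherence satisfies μ̄² = (1/(N(N−1))) Σ_{j≠k} μ_jk² = (N − |M|)/((N−1)·|M|). -/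
/-!
Column `j` of `Φ` is `(χ_r j)_{r ∈ M} / √|M|` for the additive characters
`χ_r j = exp (2πi r j / N)` of `ℤ/N`, so `⟨φ_j, φ_k⟩ = |M|⁻¹ ∑_{r ∈ M} χ_r (k - j)` depends only on
`k - j`, and translation by `j` carries the coherences of column `j` onto those of column `0`.
For the mean square, orthogonality of the distinct characters `χ_r` gives
`∑_d |∑_{r ∈ M} χ_r d|² = N |M|`; removing the term `d = 0`, which is `|M|²`, leaves
`∑_{d ≠ 0} μ_{0d}² = N / |M| - 1`.
-/

open Finset

open scoped ComplexConjugate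

noncomputable section

namespace AddChar

variable {G ι : Type*} [AddCommGroup G] [Fintype G] (χ : ι → AddChar G ℂ)

lemma norm_sum_conj_mul_smul_eq [Fintype ι] (a : ℂ) (j k : G) :
    ‖∑ r, conj (a * χ r j) * (a * χ r k)‖ = Complex.normSq a * ‖∑ r, χ r (k - j)‖ := by
  have : ∑ r, conj (a * χ r j) * (a * χ r k) = Complex.normSq a * ∑ r, χ r (k - j) := by
    rw [mul_sum]
    refine sum_congr rfl fun r _ => ?_
    rw [sub_eq_add_neg, map_add_eq_mul, map_neg_eq_conj, map_mul, Complex.normSq_eq_conj_mul_self]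
    ring
  rw [this, norm_mul, Complex.norm_real, Real.norm_of_nonneg (Complex.normSq_nonneg a)]

lemma sum_mul_conj_eq_ite [DecidableEq ι] (hχ : Function.Injective χ) (r t : ι) :
    ∑ d, χ r d * conj (χ t d) = if r = t then (Fintype.card G : ℂ) else 0 := by
  simp_rw [← map_neg_eq_conj, ← sub_apply]
  rw [sum_eq_ite]
  exact if_congr (sub_eq_zero.trans hχ.eq_iff) rfl rfl

lemma sum_norm_sq_sum_eq [Fintype ι] (hχ : Function.Injective χ) :
    ∑ d, ‖∑ r, χ r d‖ ^ 2 = Fintype.card G * Fintype.card ι := by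
  classical
  simp_rw [Complex.sq_norm]
  have key : ∑ d, (Complex.normSq (∑ r, χ r d) : ℂ) = Fintype.card G * Fintype.card ι := by
    simp_rw [← Complex.mul_conj, map_sum, sum_mul_sum]
    rw [sum_comm]
    refine (sum_congr rfl fun r _ => sum_comm).trans ?_
    simp [sum_mul_conj_eq_ite χ hχ, mul_comm]
  exact_mod_cast key

lemma sum_erase_zero_norm_sq_sum_eq [Fintype ι] [DecidableEq G] (hχ : Function.Injective χ) :
    ∑ d ∈ univ.erase 0, ‖∑ r, χ r d‖ ^ 2 =
      Fintype.card G * Fintype.card ι - (Fintype.card ι : ℝ) ^ 2 := by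
  rw [sum_erase_eq_sub (mem_univ 0), sum_norm_sq_sum_eq χ hχ]
  simp

end AddChar

section Translation

variable {G β : Type*} [AddGroup G] [Fintype G] [DecidableEq G]

lemma Finset.map_subRight_univ_erase (j : G) :
    (univ.erase j).map (Equiv.subRight j).toEmbedding = univ.erase 0 := by
  rw [map_erase, map_univ_equiv, Equiv.coe_toEmbedding, Equiv.subRight_apply, sub_self]

lemma Multiset.map_sub_univ_erase (f : G → β) (j : G) :
    (univ.erase j).val.map (fun k => f (k - j)) = (univ.erase 0).val.map f := by
  rw [← Finset.map_subRight_univ_erase j, map_val, Multiset.map_map]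
  rfl

lemma Finset.sum_sum_erase_sub [AddCommMonoid β] (f : G → β) :
    ∑ j, ∑ k ∈ univ.erase j, f (k - j) = Fintype.card G • ∑ d ∈ univ.erase 0, f d := by
  rw [← card_univ, ← sum_const]
  refine sum_congr rfl fun j _ => ?_
  rw [← Finset.map_subRight_univ_erase j, sum_map]
  rfl

end Translation

def dftChar (N : ℕ) [NeZero N] (r : Fin N) : AddChar (Fin N) ℂ where
  toFun j := ZMod.stdAddChar ((r * j : ℕ) : ZMod N)
  map_zero_eq_one' := by simp
  map_add_eq_mul' j k := by
    rw [← AddChar.map_add_eq_mul, Fin.val_add]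
    push_cast [ZMod.natCast_mod]
    ring_nf

lemma dftChar_apply (N : ℕ) [NeZero N] (r j : Fin N) :
    dftChar N r j = Complex.exp (2 * Real.pi * Complex.I * (r : ℕ) * (j : ℕ) / N) := by
  simpa [dftChar, mul_assoc] using ZMod.stdAddChar_coe (N := N) ((r : ℕ) * (j : ℕ) : ℕ)

lemma dftChar_injective (N : ℕ) [NeZero N] : Function.Injective (dftChar N) := by
  intro r s h
  have h1 := DFunLike.congr_fun h 1
  simp only [dftChar, AddChar.coe_mk, Fin.val_one'] at h1
  push_cast [ZMod.natCast_mod, Nat.cast_one, mul_one] at h1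
  have h2 := ZMod.injective_stdAddChar h1
  rw [ZMod.natCast_eq_natCast_iff', Nat.mod_eq_of_lt r.isLt, Nat.mod_eq_of_lt s.isLt] at h2
  exact Fin.ext h2

/-- Random harmonic frames: coherence invariance and mean square
coherence. -/
theorem stmt16 (N : ℕ) (M : Finset (Fin N)) (hM : M.Nonempty)
    (F : Matrix (Fin N) (Fin N) ℂ)
    (hF : ∀ j k : Fin N, F j k = (1 / (Real.sqrt N : ℂ)) *
        Complex.exp (2 * Real.pi * Complex.I * (j : ℕ) * (k : ℕ) / N)) :
    -- the normalized partial Fourier matrix `Φ = √(N/|M|) · F_M`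
    let Φ : Matrix {r // r ∈ M} (Fin N) ℂ :=
      Matrix.of fun r j => (Real.sqrt ((N : ℝ) / M.card) : ℂ) * F (r : Fin N) j
    -- the coherences `μ_jk = |⟨φ_j, φ_k⟩|`
    let μc : Fin N → Fin N → ℝ := fun j k =>
      ‖∑ r : {r // r ∈ M}, conj (Φ r j) * Φ r k‖
    -- `Φ` is coherence-invariant
    (∀ j j' : Fin N,
        Multiset.map (fun k => μc j k) ((univ : Finset (Fin N)).erase j).val =
        Multiset.map (fun k => μc j' k) ((univ : Finset (Fin N)).erase j').val) ∧
    -- and its mean square coherence equals `(N − |M|)/((N−1)|M|)`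
    (∑ j, ∑ k ∈ (univ : Finset (Fin N)).erase j, μc j k ^ 2) /
        ((N : ℝ) * ((N : ℝ) - 1)) =
      ((N : ℝ) - M.card) / (((N : ℝ) - 1) * M.card) := by
  intro Φ μc
  obtain ⟨r₀, hr₀⟩ := hM
  have : NeZero N := ⟨r₀.pos.ne'⟩
  have hN : (N : ℝ) ≠ 0 := NeZero.ne _
  have hm : (0 : ℝ) < M.card := by exact_mod_cast card_pos.mpr ⟨r₀, hr₀⟩
  let χ : {r // r ∈ M} → AddChar (Fin N) ℂ := fun r => dftChar N r
  have hχ : Function.Injective χ := (dftChar_injective N).comp Subtype.val_injective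
  let a : ℂ := (Real.sqrt ((N : ℝ) / M.card) : ℂ) * (1 / (Real.sqrt N : ℂ))
  have hΦ : ∀ r j, Φ r j = a * χ r j := fun r j => by
    simp [Φ, χ, a, hF, dftChar_apply, mul_assoc]
  have ha : Complex.normSq a = 1 / M.card := by
    simp only [a, map_mul, map_div₀, map_one, Complex.normSq_ofReal,
      Real.mul_self_sqrt (Nat.cast_nonneg _), Real.mul_self_sqrt (div_nonneg (Nat.cast_nonneg _) hm.le)]
    field_simp
  let g : Fin N → ℝ := fun d => Complex.normSq a * ‖∑ r, χ r d‖
  have hμ : ∀ j k, μc j k = g (k - j) := fun j k => by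
    simp only [μc, hΦ]
    exact AddChar.norm_sum_conj_mul_smul_eq χ a j k
  refine ⟨fun j j' => ?_, ?_⟩
  · simp only [hμ, Multiset.map_sub_univ_erase]
  · simp only [hμ]
    rw [Finset.sum_sum_erase_sub (g · ^ 2)]
    simp only [g, mul_pow, ← mul_sum, ha, Fintype.card_fin, nsmul_eq_mul]
    rw [AddChar.sum_erase_zero_norm_sq_sum_eq χ hχ, Fintype.card_fin, Fintype.card_coe]
    rcases eq_or_ne ((N : ℝ) - 1) 0 with hN1 | hN1
    · simp [hN1]
    · field_simp
end
end
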